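/- arXiv:2304.07703 — 5 statements merged into one kernel-verified Lean document; each statement's English description precedes it below -/
import Mathlib

section
/- Let S be a countably infinite set, t₀ > 0, and c : S × S → [0,∞) symmetric (c(x,y) = c(y,x)) with c(x,x) = 0 for all x. Let (Ω, P) be a probability space and, for each unordered pair {x,y} of distinct points of S, let X_{x,y} : Ω → {0,1} be a measurable map with P(X_{x,y} = 1) = 1 − exp(−c(x,y)·t₀), the family (X_{x,y})_{ {x,y} } being independent. If for P-almost every ω every connected component of the simple graph on S with edge set {{x,y} : x ≠ y, X_{x,y}(ω) = 1} is finite, then ∑_{y∈S} c(x,y) < ∞ for every x ∈ S. -/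
/-!
If `∑_y c(x,y) = ∞`, then also `∑_y P(X_{x,y} = 1) = ∑_y (1 - exp(-c(x,y) t₀)) = ∞`, since
`1 - exp(-v) ≥ v / 2` as soon as the left side is below `1/2`. The edges at `x` are independent,
so by the second Borel–Cantelli lemma `x` almost surely has infinitely many neighbours, and its
component is infinite.
-/

open MeasureTheory ProbabilityTheory Filter

lemma Real.le_two_mul_one_sub_exp_neg {v : ℝ} (hv : 0 ≤ v) (h : 1 - Real.exp (-v) < 1 / 2) :
    v ≤ 2 * (1 - Real.exp (-v)) := by
  have hexp : Real.exp (-v) * Real.exp v = 1 := by rw [← Real.exp_add]; simp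
  nlinarith [Real.add_one_le_exp v, Real.exp_pos v, Real.exp_pos (-v)]

lemma summable_of_summable_one_sub_exp_neg {ι : Type*} {f : ι → ℝ} (hf : ∀ i, 0 ≤ f i)
    (h : Summable fun i => 1 - Real.exp (-f i)) : Summable f := by
  refine (h.mul_left 2).of_norm_bounded_eventually ?_
  filter_upwards [h.tendsto_cofinite_zero.eventually (gt_mem_nhds one_half_pos)] with i hi
  rw [Real.norm_of_nonneg (hf i)]
  exact Real.le_two_mul_one_sub_exp_neg (hf i) hi

lemma summable_of_tsum_ofReal_one_sub_exp_neg_ne_top {ι : Type*} {f : ι → ℝ} (hf : ∀ i, 0 ≤ f i)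
    (h : ∑' i, ENNReal.ofReal (1 - Real.exp (-f i)) ≠ ⊤) : Summable f := by
  refine summable_of_summable_one_sub_exp_neg hf ?_
  refine (ENNReal.summable_toReal h).congr fun i => ENNReal.toReal_ofReal ?_
  simpa using hf i

namespace ProbabilityTheory

variable {Ω ι : Type*} {mΩ : MeasurableSpace Ω} {μ : Measure Ω}

theorem iIndepFun.iIndepSet_preimage {β : ι → Type*} [∀ i, MeasurableSpace (β i)]
    {f : ∀ i, Ω → β i} (h : iIndepFun f μ)
    (hf : ∀ i, Measurable (f i)) {t : ∀ i, Set (β i)} (ht : ∀ i, MeasurableSet (t i)) :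
    iIndepSet (fun i => f i ⁻¹' t i) μ :=
  (iIndepSet_iff_meas_biInter fun i => hf i (ht i)).2 fun s =>
    h.measure_inter_preimage_eq_mul s fun i _ => ht i

theorem ae_infinite_setOf_mem_of_iIndepSet [Countable ι] {s : ι → Set Ω}
    (hsm : ∀ i, MeasurableSet (s i)) (hs : iIndepSet s μ)
    (hs' : ∑' i, μ (s i) = ⊤) : ∀ᵐ ω ∂μ, {i | ω ∈ s i}.Infinite := by
  have := hs.isProbabilityMeasure
  have : Infinite ι := by
    by_contra hfin
    rw [not_infinite_iff_finite] at hfin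
    have := Fintype.ofFinite ι
    rw [tsum_fintype] at hs'
    exact ENNReal.sum_ne_top.2 (fun i _ => measure_ne_top μ (s i)) hs'
  obtain ⟨e⟩ := nonempty_equiv_of_countable (α := ℕ) (β := ι)
  have hlimsup : μ (limsup (fun n => s (e n)) atTop) = 1 :=
    measure_limsup_eq_one (fun n => hsm (e n)) (hs.precomp e.injective)
      (by rwa [e.tsum_eq (f := fun i => μ (s i))])
  have hae : ∀ᵐ ω ∂μ, ω ∈ limsup (fun n => s (e n)) atTop := by
    rw [ae_mem_iff_measure_eq
      (MeasurableSet.measurableSet_limsup fun n => hsm (e n)).nullMeasurableSet]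
    rwa [measure_univ]
  filter_upwards [hae] with ω hω
  have hinf : {n | ω ∈ s (e n)}.Infinite :=
    Nat.frequently_atTop_iff_infinite.1 (mem_limsup_iff_frequently_mem.1 hω)
  exact (hinf.image e.injective.injOn).mono (Set.image_subset_iff.2 fun _ hn => hn)

end ProbabilityTheory

theorem stmt_0_general {S : Type*} [Countable S]
    {Ω : Type*} [MeasurableSpace Ω] (P : Measure Ω)
    (t₀ : ℝ) (ht₀ : 0 < t₀)
    (c : S → S → ℝ) (hc_nonneg : ∀ x y, 0 ≤ c x y)
    (X : Sym2 S → Ω → Bool)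
    (hX_meas : ∀ p : Sym2 S, ¬ p.IsDiag → Measurable (X p))
    (hX_law : ∀ x y : S, x ≠ y →
      P {ω | X s(x, y) ω = true} = ENNReal.ofReal (1 - Real.exp (-(c x y * t₀))))
    (hindep : iIndepFun
      (fun p : {p : Sym2 S // ¬ p.IsDiag} => X p.1) P)
    (hfin : ∀ᵐ ω ∂P, ∀ x : S,
      {y : S | (SimpleGraph.fromRel (fun a b => X s(a, b) ω = true)).Reachable x y}.Finite) :
    ∀ x : S, Summable (fun y => c x y) := by
  intro x
  by_contra hns
  have hne (y : ({x}ᶜ : Set S)) : x ≠ y := fun h => y.2 h.symm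
  let edge (y : ({x}ᶜ : Set S)) : {p : Sym2 S // ¬ p.IsDiag} :=
    ⟨s(x, y), Sym2.mk_isDiag_iff.not.2 (hne y)⟩
  have hedge : Function.Injective edge := fun y z h =>
    Subtype.ext (Sym2.congr_right.1 (congrArg Subtype.val h))
  let E (y : ({x}ᶜ : Set S)) : Set Ω := X s(x, y) ⁻¹' {true}
  have hE_meas (y : ({x}ᶜ : Set S)) : MeasurableSet (E y) :=
    hX_meas _ (edge y).2 (measurableSet_singleton true)
  have hE_indep : iIndepSet E P := by
    have hopen : iIndepSet (fun p : {p : Sym2 S // ¬ p.IsDiag} => X p.1 ⁻¹' {true}) P :=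
      hindep.iIndepSet_preimage (fun p => hX_meas p.1 p.2) fun _ => measurableSet_singleton true
    exact (hopen.precomp hedge :)
  have hE_sum : ∑' y, P (E y) = ⊤ := by
    by_contra hsum
    refine hns ((Set.finite_singleton x).summable_compl_iff.1
      ((summable_mul_right_iff ht₀.ne').1 ?_))
    refine summable_of_tsum_ofReal_one_sub_exp_neg_ne_top
      (fun y => mul_nonneg (hc_nonneg x y) ht₀.le) ?_
    have hlaw (y : ({x}ᶜ : Set S)) :
        P (E y) = ENNReal.ofReal (1 - Real.exp (-(c x y * t₀))) := hX_law x y (hne y)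
    simpa only [hlaw, Function.comp_apply] using hsum
  have := hE_indep.isProbabilityMeasure
  obtain ⟨ω, hinf, hfinω⟩ :=
    ((ae_infinite_setOf_mem_of_iIndepSet hE_meas hE_indep hE_sum).and hfin).exists
  refine (hfinω x).not_infinite ((hinf.image Subtype.val_injective.injOn).mono ?_)
  rintro _ ⟨y, hy, rfl⟩
  exact (SimpleGraph.fromRel_adj _ _ _ |>.2 ⟨hne y, Or.inl hy⟩).reachable

/-- If, for some `t₀ > 0`, the random graph on a countably infinite set `S`
obtained by opening the edge `{x,y}` with probability `1 - exp(-c(x,y) t₀)`, independently over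
unordered pairs, almost surely has only finite connected components, then
`∑_y c(x,y) < ∞` for every `x`. -/
theorem stmt_0 {S : Type*} [Countable S] [Infinite S]
    {Ω : Type*} [MeasurableSpace Ω] (P : Measure Ω) [IsProbabilityMeasure P]
    (t₀ : ℝ) (ht₀ : 0 < t₀)
    (c : S → S → ℝ) (hc_nonneg : ∀ x y, 0 ≤ c x y)
    (hc_symm : ∀ x y, c x y = c y x) (hc_diag : ∀ x, c x x = 0)
    (X : Sym2 S → Ω → Bool)
    (hX_meas : ∀ p : Sym2 S, ¬ p.IsDiag → Measurable (X p))
    (hX_law : ∀ x y : S, x ≠ y →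
      P {ω | X s(x, y) ω = true} = ENNReal.ofReal (1 - Real.exp (-(c x y * t₀))))
    (hindep : iIndepFun
      (fun p : {p : Sym2 S // ¬ p.IsDiag} => X p.1) P)
    (hfin : ∀ᵐ ω ∂P, ∀ x : S,
      {y : S | (SimpleGraph.fromRel (fun a b => X s(a, b) ω = true)).Reachable x y}.Finite) :
    ∀ x : S, Summable (fun y => c x y) :=
  stmt_0_general P t₀ ht₀ c hc_nonneg X hX_meas hX_law hindep hfin
end

section
/- Let (Ω, 𝓕, μ) be a probability space, T : Ω → Ω a measure-preserving map, and g : Ω → ℝ a measurable function with g(ω) > 0 for μ-almost every ω. Then for μ-almost every ω the partial sums ∑_{k=0}^{n−1} g(T^k ω) tend to +∞ as n → ∞. -/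
/-!
Poincaré recurrence applied to the sets `{q < g}`, `q` rational, shows that almost every orbit
returns infinitely often to where `g` exceeds any fixed constant below its starting value.
So the terms `g (T^[k] ω)` are positive and do not tend to `0`, hence are not summable,
and the partial sums of a nonnegative non-summable sequence diverge to `+∞`.
-/

open MeasureTheory Filter

theorem tendsto_sum_range_atTop_of_frequently_lt {f : ℕ → ℝ} (hf : ∀ n, 0 ≤ f n) {ε : ℝ}
    (hε : 0 < ε) (h : ∃ᶠ n in atTop, ε < f n) :
    Tendsto (fun n => ∑ k ∈ Finset.range n, f k) atTop atTop := by
  rw [← not_summable_iff_tendsto_nat_atTop_of_nonneg hf]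
  intro hsum
  have hsmall : ∀ᶠ n in atTop, f n < ε := hsum.tendsto_atTop_zero.eventually (gt_mem_nhds hε)
  obtain ⟨n, hlt, hgt⟩ := (h.and_eventually hsmall).exists
  exact hlt.asymm hgt

theorem MeasureTheory.Conservative.ae_forall_lt_frequently_lt_comp_iterate {α : Type*}
    [MeasurableSpace α] {μ : Measure α} {T : α → α} (hT : Conservative T μ) {f : α → ℝ}
    (hf : Measurable f) :
    ∀ᵐ x ∂μ, ∀ c < f x, ∃ᶠ n in atTop, c < f (T^[n] x) := by
  have hrec : ∀ᵐ x ∂μ, ∀ q : ℚ, (q : ℝ) < f x → ∃ᶠ n in atTop, (q : ℝ) < f (T^[n] x) :=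
    ae_all_iff.2 fun q =>
      hT.ae_mem_imp_frequently_image_mem (measurableSet_lt measurable_const hf).nullMeasurableSet
  filter_upwards [hrec] with x hx c hc
  obtain ⟨q, hcq, hqf⟩ := exists_rat_btwn hc
  exact (hx q hqf).mono fun n hn => hcq.trans hn

/-- For a measure-preserving map `T` of a probability space and a measurable
function `g` which is almost everywhere strictly positive, the ergodic sums
`∑_{k<n} g(T^k ω)` tend to `+∞` for almost every `ω`. -/
theorem stmt_8 {Ω : Type*} [MeasurableSpace Ω] (μ : Measure Ω) [IsProbabilityMeasure μ]
    (T : Ω → Ω) (hT : MeasurePreserving T μ μ)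
    (g : Ω → ℝ) (hg_meas : Measurable g) (hg_pos : ∀ᵐ ω ∂μ, 0 < g ω) :
    ∀ᵐ ω ∂μ, Tendsto (fun n : ℕ => ∑ k ∈ Finset.range n, g (T^[k] ω)) atTop atTop := by
  have horbit_pos : ∀ᵐ ω ∂μ, ∀ k, 0 < g (T^[k] ω) :=
    ae_all_iff.2 fun k => (hT.iterate k).quasiMeasurePreserving.ae hg_pos
  filter_upwards [hT.conservative.ae_forall_lt_frequently_lt_comp_iterate hg_meas, horbit_pos,
    hg_pos] with ω hrec hpos hω
  exact tendsto_sum_range_atTop_of_frequently_lt (fun k => (hpos k).le) (half_pos hω)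
    (hrec _ (half_lt_self hω))
end

section
/- Let f, g, h : [0,∞) → ℕ be nondecreasing with f and g right-continuous. Assume every jump of f has size at most 1 (f(t) ≤ f(t−) + 1 for all t > 0) and that f − g is nondecreasing. Then the following are equivalent: (A) there exists t₁ ∈ (0,1] such that f(1) = f(t₁), f(t₁) = f(t₁−) + 1, g(t₁) = g(t₁−) + 1, and h(s) = h(0) for all s ∈ [0, t₁); (B) there exists n₀ ≥ 1 such that for every n ≥ n₀ there is k ∈ {1, …, 2ⁿ} with f(1) = f(k 2^{−n}), f(k 2^{−n}) = f((k−1) 2^{−n}) + 1, g(k 2^{−n}) = g((k−1) 2^{−n}) + 1, and h((k−1) 2^{−n}) = h(0). -/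
/-!
A monotone ℕ-valued function is constant on a window `(c, t)` left of each `t`, equal to its left
limit there, and wherever `f` is constant so is `g`, because `f - g` is nondecreasing.

(A) ⇒ (B): with `k = ⌈t₁ 2ⁿ⌉`, the dyadic interval `((k-1)/2ⁿ, k/2ⁿ]` contains `t₁` and lies in
`[0, 1]`; for large `n` its left endpoint is in the windows of `f` and `g` at `t₁`, and `f`, hence
`g`, is constant on `[t₁, k/2ⁿ]`.

(B) ⇒ (A): let `T` be the first time `f` reaches `f 1`, attained by right-continuity. Each
interval of (B) ends in `[T, 1]` and starts in `[T - 2⁻ⁿ, T)`, so its left endpoints enter every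
window left of `T`; they carry the unit jumps of `f` and `g` and the value `h 0` up to `T`.
-/

open Function Filter Topology Set

theorem Monotone.exists_Ioo_eq_leftLim {α β : Type*} [LinearOrder α] [TopologicalSpace α]
    [OrderTopology α] [ConditionallyCompleteLinearOrder β] [TopologicalSpace β]
    [OrderTopology β] [DiscreteTopology β] {f : α → β} (hf : Monotone f) {b t : α} (hbt : b < t) :
    ∃ c < t, ∀ s ∈ Ioo c t, f s = leftLim f t := by
  have hev : {s | f s = leftLim f t} ∈ 𝓝[<] t :=
    hf.tendsto_leftLim t ((isOpen_discrete {leftLim f t}).mem_nhds rfl)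
  obtain ⟨c, hc, hsub⟩ := (mem_nhdsLT_iff_exists_Ioo_subset' hbt).1 hev
  exact ⟨c, hc, fun s hs => hsub hs⟩

theorem IsGLB.exists_mem_eq_of_continuousWithinAt {α β : Type*} [LinearOrder α]
    [TopologicalSpace α] [OrderTopology α] [TopologicalSpace β] [DiscreteTopology β]
    {f : α → β} {S : Set α} {a : α} (ha : IsGLB S a) (hS : S.Nonempty)
    (hf : ContinuousWithinAt f (Ici a) a) : ∃ s ∈ S, f s = f a :=
  ((ha.frequently_mem hS).and_eventually (hf ((isOpen_discrete {f a}).mem_nhds rfl))).exists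

theorem eq_of_monotone_sub {α : Type*} [Preorder α] {f g : α → ℕ} (hg : Monotone g)
    (hfg : Monotone fun t => (f t : ℤ) - g t) {s t : α} (hst : s ≤ t) (hf : f s = f t) :
    g s = g t := by
  have h₁ := hg hst
  have h₂ := hfg hst
  simp only at h₂
  omega

theorem eventually_inv_two_pow_lt {ε : NNReal} (hε : 0 < ε) :
    ∀ᶠ n in atTop, ((2 : NNReal) ^ n)⁻¹ < ε := by
  have h : Tendsto (fun n : ℕ => ((2 : NNReal) ^ n)⁻¹) atTop (𝓝 0) := by
    simpa only [inv_pow] using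
      NNReal.tendsto_pow_atTop_nhds_zero_of_lt_one (r := 2⁻¹) (by norm_num)
  exact h.eventually (gt_mem_nhds hε)

noncomputable def dyadicPoint (n k : ℕ) : NNReal := k * ((2 : NNReal) ^ n)⁻¹

section dyadicPoint

variable {n k : ℕ} {t : NNReal}

theorem dyadicPoint_pred_add (hk : 1 ≤ k) :
    dyadicPoint n (k - 1) + ((2 : NNReal) ^ n)⁻¹ = dyadicPoint n k := by
  rw [dyadicPoint, dyadicPoint, ← add_one_mul, ← Nat.cast_add_one, Nat.sub_add_cancel hk]

theorem dyadicPoint_le_one (hk : k ≤ 2 ^ n) : dyadicPoint n k ≤ 1 :=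
  (mul_inv_le_iff₀ (by positivity)).2 (by rw [one_mul]; exact_mod_cast hk)

theorem lt_dyadicPoint_pred {c : NNReal} (hk : 1 ≤ k) (ht : t ≤ dyadicPoint n k)
    (hn : ((2 : NNReal) ^ n)⁻¹ < t - c) : c < dyadicPoint n (k - 1) := by
  rw [← dyadicPoint_pred_add hk] at ht
  exact lt_of_add_lt_add_right ((lt_tsub_iff_left.1 hn).trans_le ht)

theorem one_le_ceil_mul_two_pow (ht : 0 < t) : 1 ≤ ⌈t * 2 ^ n⌉₊ :=
  Nat.one_le_ceil_iff.2 (by positivity)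

theorem ceil_mul_two_pow_le (ht : t ≤ 1) : ⌈t * 2 ^ n⌉₊ ≤ 2 ^ n :=
  Nat.ceil_le.2 (by push_cast; exact mul_le_of_le_one_left zero_le ht)

theorem le_dyadicPoint_ceil : t ≤ dyadicPoint n ⌈t * 2 ^ n⌉₊ :=
  (le_mul_inv_iff₀ (by positivity)).2 (Nat.le_ceil _)

theorem dyadicPoint_ceil_pred_lt (ht : 0 < t) : dyadicPoint n (⌈t * 2 ^ n⌉₊ - 1) < t :=
  (mul_inv_lt_iff₀ (by positivity)).2 <|
    Nat.lt_ceil.1 <| Nat.sub_one_lt <| Nat.one_le_iff_ne_zero.1 (one_le_ceil_mul_two_pow ht)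

end dyadicPoint

def IsLastJointJump (f g h : NNReal → ℕ) (t : NNReal) : Prop :=
  0 < t ∧ t ≤ 1 ∧ f 1 = f t ∧ f t = leftLim f t + 1 ∧ g t = leftLim g t + 1 ∧
    ∀ s, s < t → h s = h 0

def IsDyadicLastJointJump (f g h : NNReal → ℕ) (n k : ℕ) : Prop :=
  1 ≤ k ∧ k ≤ 2 ^ n ∧ f 1 = f (dyadicPoint n k) ∧
    f (dyadicPoint n k) = f (dyadicPoint n (k - 1)) + 1 ∧
    g (dyadicPoint n k) = g (dyadicPoint n (k - 1)) + 1 ∧ h (dyadicPoint n (k - 1)) = h 0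

section JointJump

variable {f g h : NNReal → ℕ} (hf : Monotone f) (hg : Monotone g)
  (hfg : Monotone fun t => (f t : ℤ) - g t)
include hf hg hfg

theorem eventually_isDyadicLastJointJump {t : NNReal} (ht : IsLastJointJump f g h t) :
    ∀ᶠ n in atTop, ∃ k, IsDyadicLastJointJump f g h n k := by
  obtain ⟨ht0, ht1, hft, hfj, hgj, hhc⟩ := ht
  obtain ⟨cf, hcf, hf_left⟩ := hf.exists_Ioo_eq_leftLim ht0
  obtain ⟨cg, hcg, hg_left⟩ := hg.exists_Ioo_eq_leftLim ht0
  filter_upwards [eventually_inv_two_pow_lt (tsub_pos_of_lt (max_lt hcf hcg))] with n hn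
  have hk1 : 1 ≤ ⌈t * 2 ^ n⌉₊ := one_le_ceil_mul_two_pow ht0
  have hk2 : ⌈t * 2 ^ n⌉₊ ≤ 2 ^ n := ceil_mul_two_pow_le ht1
  have htb : t ≤ dyadicPoint n ⌈t * 2 ^ n⌉₊ := le_dyadicPoint_ceil
  have hat := dyadicPoint_ceil_pred_lt (n := n) ht0
  have hca := lt_dyadicPoint_pred hk1 htb hn
  have hfb : f (dyadicPoint n ⌈t * 2 ^ n⌉₊) = f t :=
    le_antisymm (hft ▸ hf (dyadicPoint_le_one hk2)) (hf htb)
  have hgb := eq_of_monotone_sub hg hfg htb hfb.symm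
  refine ⟨_, hk1, hk2, hft.trans hfb.symm, ?_, ?_, hhc _ hat⟩
  · rw [hfb, hf_left _ ⟨(le_max_left _ _).trans_lt hca, hat⟩, hfj]
  · rw [← hgb, hg_left _ ⟨(le_max_right _ _).trans_lt hca, hat⟩, hgj]

theorem exists_isLastJointJump_of_eventually (hh : Monotone h)
    (hf_rc : ∀ t, ContinuousWithinAt f (Ici t) t)
    (hB : ∀ᶠ n in atTop, ∃ k, IsDyadicLastJointJump f g h n k) :
    ∃ t, IsLastJointJump f g h t := by
  have h1 : 1 ∈ {t | f 1 ≤ f t} := le_refl (f 1)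
  set T := sInf {t | f 1 ≤ f t}
  have hT : IsGLB {t | f 1 ≤ f t} T := isGLB_csInf ⟨1, h1⟩ (OrderBot.bddBelow _)
  have hT1 : T ≤ 1 := hT.1 h1
  have hfT : f T = f 1 := by
    obtain ⟨s, hs, hfs⟩ := hT.exists_mem_eq_of_continuousWithinAt ⟨1, h1⟩ (hf_rc T)
    exact le_antisymm (hf hT1) (hfs ▸ hs)
  have hT0 : 0 < T := by
    obtain ⟨n, k, -, -, hfb, hfab, -⟩ := hB.exists
    refine pos_of_ne_zero fun hT_zero => ?_
    have := hf (zero_le : 0 ≤ dyadicPoint n (k - 1))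
    rw [← hT_zero] at this
    omega
  have hwindow : ∀ c < T, ∃ a ∈ Ioo c T, f a + 1 = f T ∧ g T = g a + 1 ∧ h a = h 0 := by
    intro c hc
    obtain ⟨n, ⟨k, hk1, -, hfb, hfab, hgab, hha⟩, hn⟩ :=
      (hB.and (eventually_inv_two_pow_lt (tsub_pos_of_lt hc))).exists
    have hTb : T ≤ dyadicPoint n k := hT.1 hfb.le
    have haT : dyadicPoint n (k - 1) < T := lt_of_not_ge fun hTa => by
      have := hf hTa
      omega
    have hgb := eq_of_monotone_sub hg hfg hTb (hfT.trans hfb)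
    exact ⟨_, ⟨lt_dyadicPoint_pred hk1 hTb hn, haT⟩, by omega, by omega, hha⟩
  obtain ⟨cf, hcf, hf_left⟩ := hf.exists_Ioo_eq_leftLim hT0
  obtain ⟨cg, hcg, hg_left⟩ := hg.exists_Ioo_eq_leftLim hT0
  refine ⟨T, hT0, hT1, hfT.symm, ?_, ?_, ?_⟩
  · obtain ⟨a, ha, hfa, -, -⟩ := hwindow cf hcf
    rw [← hf_left a ha, hfa]
  · obtain ⟨a, ha, -, hga, -⟩ := hwindow cg hcg
    rw [← hg_left a ha, hga]
  · intro s hs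
    obtain ⟨a, ha, -, -, hha⟩ := hwindow s hs
    exact le_antisymm (hha ▸ hh ha.1.le) (hh (zero_le : 0 ≤ s))

end JointJump

theorem stmt_11_general (f g h : NNReal → ℕ)
    (hf : Monotone f) (hg : Monotone g) (hh : Monotone h)
    (hf_rc : ∀ t, ContinuousWithinAt f (Ici t) t)
    (hfg : Monotone (fun t => (f t : ℤ) - (g t : ℤ))) :
    (∃ t₁ : NNReal, 0 < t₁ ∧ t₁ ≤ 1 ∧ f 1 = f t₁ ∧
        f t₁ = leftLim f t₁ + 1 ∧ g t₁ = leftLim g t₁ + 1 ∧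
        ∀ s, s < t₁ → h s = h 0)
    ↔ (∃ n₀ : ℕ, 1 ≤ n₀ ∧ ∀ n, n₀ ≤ n → ∃ k : ℕ, 1 ≤ k ∧ k ≤ 2 ^ n ∧
        f 1 = f ((k : NNReal) * ((2 : NNReal) ^ n)⁻¹) ∧
        f ((k : NNReal) * ((2 : NNReal) ^ n)⁻¹)
          = f (((k - 1 : ℕ) : NNReal) * ((2 : NNReal) ^ n)⁻¹) + 1 ∧
        g ((k : NNReal) * ((2 : NNReal) ^ n)⁻¹)
          = g (((k - 1 : ℕ) : NNReal) * ((2 : NNReal) ^ n)⁻¹) + 1 ∧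
        h (((k - 1 : ℕ) : NNReal) * ((2 : NNReal) ^ n)⁻¹) = h 0) := by
  constructor
  · rintro ⟨t, ht⟩
    obtain ⟨N, hN⟩ := eventually_atTop.1 (eventually_isDyadicLastJointJump hf hg hfg ht)
    exact ⟨max N 1, le_max_right _ _, fun n hn => hN n (le_of_max_le_left hn)⟩
  · rintro ⟨n₀, -, hB⟩
    exact exists_isLastJointJump_of_eventually hf hg hfg hh hf_rc (eventually_atTop.2 ⟨n₀, hB⟩)

/-- Dyadic characterization of a single joint jump: for nondecreasing
`f, g, h : [0,∞) → ℕ` with `f, g` right-continuous, all jumps of `f` of size at most 1, and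
`f - g` nondecreasing, the existence of a time `t₁ ∈ (0,1]` with `f(1) = f(t₁)`,
`f(t₁) = f(t₁-) + 1`, `g(t₁) = g(t₁-) + 1` and `h` constant on `[0, t₁)` is equivalent to its
dyadic approximation (B). -/
theorem stmt_11 (f g h : NNReal → ℕ)
    (hf : Monotone f) (hg : Monotone g) (hh : Monotone h)
    (hf_rc : ∀ t, ContinuousWithinAt f (Ici t) t)
    (hg_rc : ∀ t, ContinuousWithinAt g (Ici t) t)
    (hf_jump : ∀ t : NNReal, 0 < t → f t ≤ leftLim f t + 1)
    (hfg : Monotone (fun t => (f t : ℤ) - (g t : ℤ))) :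
    (∃ t₁ : NNReal, 0 < t₁ ∧ t₁ ≤ 1 ∧ f 1 = f t₁ ∧
        f t₁ = leftLim f t₁ + 1 ∧ g t₁ = leftLim g t₁ + 1 ∧
        ∀ s, s < t₁ → h s = h 0)
    ↔ (∃ n₀ : ℕ, 1 ≤ n₀ ∧ ∀ n, n₀ ≤ n → ∃ k : ℕ, 1 ≤ k ∧ k ≤ 2 ^ n ∧
        f 1 = f ((k : NNReal) * ((2 : NNReal) ^ n)⁻¹) ∧
        f ((k : NNReal) * ((2 : NNReal) ^ n)⁻¹)
          = f (((k - 1 : ℕ) : NNReal) * ((2 : NNReal) ^ n)⁻¹) + 1 ∧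
        g ((k : NNReal) * ((2 : NNReal) ^ n)⁻¹)
          = g (((k - 1 : ℕ) : NNReal) * ((2 : NNReal) ^ n)⁻¹) + 1 ∧
        h (((k - 1 : ℕ) : NNReal) * ((2 : NNReal) ^ n)⁻¹) = h 0) :=
  stmt_11_general f g h hf hg hh hf_rc hfg
end

section
/- Let S be a countably infinite set and (Ω, 𝓕) a measurable space. For each unordered pair {x,y} of distinct points of S let X_{x,y} : Ω → {0,1} be a measurable map. Then the set of ω ∈ Ω such that every connected component of the simple graph on S with edge set {{x,y} : x ≠ y, X_{x,y}(ω) = 1} is finite, is measurable (belongs to 𝓕). -/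
/-!
An `r`-path from `a` to `b` is a list, and there are countably many lists, so reachability is a
countable union of finite intersections of edge events. A set of vertices is a point of the
countable product `Set V = V → Prop`, in which the finite sets form a countable, hence measurable,
family.
-/

section
variable {Ω V : Type*} [MeasurableSpace Ω]

lemma measurableSet_setOf_isChain_cons {r : Ω → V → V → Prop}
    (hr : ∀ a b, MeasurableSet {ω | r ω a b}) (l : List V) (a : V) :
    MeasurableSet {ω | (a :: l).IsChain (r ω)} := by
  induction l generalizing a with
  | nil => simp
  | cons b l ih =>
    simp only [List.isChain_cons_cons, Set.ofPred_and]
    exact (hr a b).inter (ih b)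

lemma measurableSet_setOf_reflTransGen [Countable V] {r : Ω → V → V → Prop}
    (hr : ∀ a b, MeasurableSet {ω | r ω a b}) (a b : V) :
    MeasurableSet {ω | Relation.ReflTransGen (r ω) a b} := by
  have hchain : {ω | Relation.ReflTransGen (r ω) a b} =
      ⋃ (l : List V) (_ : (a :: l).getLast (List.cons_ne_nil a l) = b),
        {ω | (a :: l).IsChain (r ω)} := by
    ext ω
    simp only [Set.mem_ofPred_eq, Set.mem_iUnion, exists_prop]
    exact ⟨fun h ↦ (List.exists_isChain_cons_of_relationReflTransGen h).imp fun _ ↦ And.symm,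
      fun ⟨l, hl, hc⟩ ↦ List.relationReflTransGen_of_exists_isChain_cons l hc hl⟩
  rw [hchain]
  exact .iUnion fun l ↦ .iUnion fun _ ↦ measurableSet_setOf_isChain_cons hr l a

lemma measurableSet_setOf_finite [Countable V] {p : Ω → V → Prop}
    (hp : ∀ v, MeasurableSet {ω | p ω v}) : MeasurableSet {ω | {v | p ω v}.Finite} :=
  have hmeas : Measurable fun ω ↦ {v | p ω v} :=
    measurable_set_iff.2 fun v ↦ measurableSet_setOfPred.1 (hp v)
  hmeas MeasurableSet.setOfPred_finite

lemma measurableSet_setOf_forall_reachable_finite [Countable V] {G : Ω → SimpleGraph V}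
    (hG : ∀ a b, MeasurableSet {ω | (G ω).Adj a b}) :
    MeasurableSet {ω | ∀ a, {b | (G ω).Reachable a b}.Finite} := by
  simp only [SimpleGraph.reachable_iff_reflTransGen, Set.ofPred_forall]
  exact .iInter fun a ↦ measurableSet_setOf_finite (measurableSet_setOf_reflTransGen hG a)

end

theorem stmt_12_general {S : Type*} [Countable S]
    {Ω : Type*} [MeasurableSpace Ω]
    (X : S → S → Ω → Bool)
    (hX_meas : ∀ x y : S, x ≠ y → Measurable (X x y)) :
    MeasurableSet {ω : Ω | ∀ x : S,
      {y : S | (SimpleGraph.fromRel (fun a b => X a b ω = true)).Reachable x y}.Finite} := by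
  refine measurableSet_setOf_forall_reachable_finite fun a b ↦ ?_
  rcases eq_or_ne a b with rfl | hab
  · simp
  · simp only [SimpleGraph.fromRel_adj, ne_eq, hab, not_false_eq_true, true_and, Set.ofPred_or]
    exact (measurableSet_eq_fun (hX_meas a b hab) measurable_const).union
      (measurableSet_eq_fun (hX_meas b a hab.symm) measurable_const)

/-- Measurability of the event that all connected components of the random
graph with edge indicators `X_{x,y}` are finite. -/
theorem stmt_12 {S : Type*} [Countable S] [Infinite S]
    {Ω : Type*} [MeasurableSpace Ω]
    (X : S → S → Ω → Bool)
    (hX_symm : ∀ x y, X x y = X y x)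
    (hX_meas : ∀ x y : S, x ≠ y → Measurable (X x y)) :
    MeasurableSet {ω : Ω | ∀ x : S,
      {y : S | (SimpleGraph.fromRel (fun a b => X a b ω = true)).Reachable x y}.Finite} :=
  stmt_12_general X hX_meas
end

section
/- Let (N_i)_{i∈ℕ} be an independent family of ℕ-valued random variables on a probability space (Ω, P), where each N_i is Poisson distributed with parameter λ_i ≥ 0 and Λ := ∑_{i} λ_i < ∞. Then almost surely ∑_i N_i < ∞ (only finitely many N_i are nonzero), and the random variable M := ∑_i N_i is Poisson distributed with parameter Λ. -/
/-!
Since `P (N i ≠ 0) = 1 - exp (-λ i) ≤ λ i` is summable, Borel–Cantelli shows that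
almost surely only finitely many `N i` are nonzero, so the partial sums
`S n = N 0 + ⋯ + N (n - 1)` are eventually equal to `M`. Each `S n` is Poisson with parameter
`λ 0 + ⋯ + λ (n - 1)`, being a sum of independent Poisson variables. As `ℕ` is discrete,
eventual equality gives `P (S n = j) → P (M = j)`, and the Poisson weights are continuous in
the parameter.
-/

open MeasureTheory ProbabilityTheory Filter Topology Finset
open scoped NNReal ENNReal

namespace ProbabilityTheory

lemma poissonMeasure_zero : Po(0) = Measure.dirac 0 := by
  refine Measure.ext_of_singleton fun n => ?_
  rw [poissonMeasure_singleton]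
  cases n <;> simp

lemma poissonMeasure_compl_zero_le (r : ℝ≥0) : Po(r) {0}ᶜ ≤ r := by
  rw [measure_compl (measurableSet_singleton 0) (measure_ne_top _ _), measure_univ,
    poissonMeasure_singleton]
  simp only [pow_zero, Nat.factorial_zero, Nat.cast_one, mul_one, div_one]
  rw [tsub_le_iff_right, ← ENNReal.ofReal_coe_nnreal,
    ← ENNReal.ofReal_add r.coe_nonneg (Real.exp_pos _).le, ← ENNReal.ofReal_one]
  exact ENNReal.ofReal_le_ofReal (by linarith [Real.add_one_le_exp (-r)])

lemma continuous_poissonMeasure_singleton (n : ℕ) : Continuous fun r : ℝ≥0 => Po(r) {n} := by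
  simp_rw [poissonMeasure_singleton]
  exact ENNReal.continuous_ofReal.comp (by fun_prop)

variable {Ω : Type*} [MeasurableSpace Ω] {P : Measure Ω}

lemma hasLaw_of_measure_preimage_singleton {α : Type*} [MeasurableSpace α] [Countable α]
    [MeasurableSingletonClass α] {X : Ω → α} {μ : Measure α} (hX : AEMeasurable X P)
    (h : ∀ a, P (X ⁻¹' {a}) = μ {a}) : HasLaw X μ P :=
  ⟨hX, Measure.ext_of_singleton fun a => by
    rw [Measure.map_apply_of_aemeasurable hX (measurableSet_singleton a), h]⟩

lemma iIndepFun.hasLaw_sum_poissonMeasure [IsProbabilityMeasure P] {ι : Type*}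
    {N : ι → Ω → ℕ} {r : ι → ℝ≥0} (hmeas : ∀ i, Measurable (N i))
    (hindep : iIndepFun N P) (hlaw : ∀ i, HasLaw (N i) Po(r i) P) (s : Finset ι) :
    HasLaw (∑ i ∈ s, N i) Po(∑ i ∈ s, r i) P := by
  classical
  induction s using Finset.induction_on with
  | empty => simpa [poissonMeasure_zero] using hasLaw_dirac_of_ae_eq (P := P) (x := 0) (by rfl)
  | insert i s hi ih =>
    rw [sum_insert hi, sum_insert hi, add_comm, add_comm (r i)]
    exact (hindep.indepFun_finsetSum_of_notMem hmeas hi).hasLaw_add_poissonMeasure ih (hlaw i)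

lemma ae_finite_setOf_ne_zero_of_tsum_ne_top {M : Type*} [Zero M] {N : ℕ → Ω → M}
    (h : ∑' i, P {ω | N i ω ≠ 0} ≠ ∞) : ∀ᵐ ω ∂P, {i | N i ω ≠ 0}.Finite := by
  filter_upwards [ae_eventually_notMem h] with ω hω
  simpa [← Nat.cofinite_eq_atTop] using hω

lemma ae_finite_setOf_ne_zero_of_hasLaw_poissonMeasure {N : ℕ → Ω → ℕ}
    {r : ℕ → ℝ≥0} (hlaw : ∀ i, HasLaw (N i) Po(r i) P) (hr : Summable r) :
    ∀ᵐ ω ∂P, {i | N i ω ≠ 0}.Finite := by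
  refine ae_finite_setOf_ne_zero_of_tsum_ne_top
    (ne_top_of_le_ne_top (ENNReal.tsum_coe_ne_top_iff_summable.2 hr)
      (ENNReal.tsum_le_tsum fun i => ?_))
  rw [(hlaw i).measure_eq (p := (· ≠ 0)) (measurableSet_singleton 0).compl]
  exact poissonMeasure_compl_zero_le (r i)

lemma eventually_sum_range_eq_finsum {M : Type*} [AddCommMonoid M] {f : ℕ → M}
    (hf : (Function.support f).Finite) :
    ∀ᶠ n in atTop, ∑ i ∈ range n, f i = ∑ᶠ i, f i := by
  obtain ⟨b, hb⟩ := hf.bddAbove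
  filter_upwards [eventually_gt_atTop b] with n hn
  refine (finsum_eq_sum_of_support_subset f fun i hi => ?_).symm
  simpa using (hb hi).trans_lt hn

lemma tendsto_measure_preimage_singleton_of_ae_eventually_eq [IsFiniteMeasure P]
    {ι α : Type*} [MeasurableSpace α] [MeasurableSingletonClass α] {L : Filter ι}
    [IsCountablyGenerated L] {X : ι → Ω → α} {Y : Ω → α} (hX : ∀ i, Measurable (X i))
    (hY : AEMeasurable Y P) (hXY : ∀ᵐ ω ∂P, ∀ᶠ i in L, X i ω = Y ω) (a : α) :
    Tendsto (fun i => P (X i ⁻¹' {a})) L (𝓝 (P (Y ⁻¹' {a}))) := by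
  rw [measure_congr (hY.ae_eq_mk.preimage {a})]
  refine tendsto_measure_of_ae_tendsto_indicator_of_isFiniteMeasure L
    (hY.measurable_mk (measurableSet_singleton a)) (fun i => hX i (measurableSet_singleton a)) ?_
  filter_upwards [hXY, hY.ae_eq_mk] with ω hω hmk
  filter_upwards [hω] with i hi
  simp [hi, hmk]

lemma hasLaw_poissonMeasure_of_ae_eventually_eq [IsFiniteMeasure P] {X : ℕ → Ω → ℕ}
    {Y : Ω → ℕ} {r : ℕ → ℝ≥0} {ρ : ℝ≥0} (hmeas : ∀ n, Measurable (X n))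
    (hlaw : ∀ n, HasLaw (X n) Po(r n) P) (hr : Tendsto r atTop (𝓝 ρ))
    (hXY : ∀ᵐ ω ∂P, ∀ᶠ n in atTop, X n ω = Y ω) :
    HasLaw Y Po(ρ) P := by
  have hY : AEMeasurable Y P :=
    aemeasurable_of_tendsto_metrizable_ae' (fun n => (hmeas n).aemeasurable)
      (hXY.mono fun _ => tendsto_nhds_of_eventually_eq)
  refine hasLaw_of_measure_preimage_singleton hY fun a => tendsto_nhds_unique
    (tendsto_measure_preimage_singleton_of_ae_eventually_eq hmeas hY hXY a) ?_
  have := ((continuous_poissonMeasure_singleton a).tendsto ρ).comp hr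
  refine this.congr fun n => ?_
  exact ((hlaw n).measure_eq (p := (· = a)) (measurableSet_singleton a)).symm

end ProbabilityTheory

/-- Superposition of independent Poisson random variables: if `N_i` are
independent Poisson with parameters `λ_i ≥ 0` and `Λ = ∑_i λ_i < ∞`, then almost surely only
finitely many `N_i` are nonzero, and `M = ∑_i N_i` is Poisson with parameter `Λ`. -/
theorem stmt_18 {Ω : Type*} [MeasurableSpace Ω] (P : Measure Ω) [IsProbabilityMeasure P]
    (N : ℕ → Ω → ℕ) (hN_meas : ∀ i, Measurable (N i))
    (lam : ℕ → ℝ) (hlam : ∀ i, 0 ≤ lam i) (hlam_sum : Summable lam)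
    (hpoisson : ∀ i (j : ℕ), P {ω | N i ω = j}
      = ENNReal.ofReal (Real.exp (-lam i) * lam i ^ j / (Nat.factorial j)))
    (hindep : iIndepFun N P) :
    (∀ᵐ ω ∂P, {i : ℕ | N i ω ≠ 0}.Finite) ∧
    ∀ j : ℕ, P {ω | (∑ᶠ i, N i ω) = j}
      = ENNReal.ofReal (Real.exp (-(∑' i, lam i)) * (∑' i, lam i) ^ j / (Nat.factorial j)) := by
  set r : ℕ → ℝ≥0 := fun i => ⟨lam i, hlam i⟩
  have hr : Summable r := NNReal.summable_coe.1 hlam_sum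
  have hlaw : ∀ i, HasLaw (N i) Po(r i) P := fun i =>
    hasLaw_of_measure_preimage_singleton (hN_meas i).aemeasurable fun j => by
      rw [poissonMeasure_singleton]
      exact hpoisson i j
  have hfin := ae_finite_setOf_ne_zero_of_hasLaw_poissonMeasure hlaw hr
  refine ⟨hfin, fun j => ?_⟩
  have hpartial :
      ∀ᵐ ω ∂P, ∀ᶠ n in atTop, (∑ i ∈ range n, N i) ω = ∑ᶠ i, N i ω := by
    filter_upwards [hfin] with ω hω
    simpa only [Finset.sum_apply] using eventually_sum_range_eq_finsum hω
  have hM := hasLaw_poissonMeasure_of_ae_eventually_eq (fun n => by fun_prop)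
    (fun n => hindep.hasLaw_sum_poissonMeasure hN_meas hlaw (range n))
    hr.hasSum.tendsto_sum_nat hpartial
  rw [hM.measure_eq (p := (· = j)) (measurableSet_singleton j), Set.ofPred_eq_eq_singleton,
    poissonMeasure_singleton, NNReal.coe_tsum]
  rfl
end
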